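/- (Theorem 3) Let X be a variable with parent set U (X ∉ U) and let f be a functional CPT for X over {X} ∪ U. Let G be a factor over a variable set Y ⊇ {X} ∪ U of the form G = f · G₀ for some factor G₀ (i.e., the product G contains f as a multiplicand), and let H be a factor over a variable set W ⊇ {X} ∪ U of the form H = f · H₀ for some factor H₀. Then G · H = G · (∑_X H) as factors over Y ∪ W. -/

import Mathlib

/-- An instantiation of the variables in `S`, where variable `i` has value set `V i`. -/
abbrev Inst {ι : Type*} (V : ι → Type*) (S : Finset ι) : Type _ :=
  ∀ i : S, V i

/-- Restrict an instantiation of `T` to a subset `S ⊆ T`. -/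
def Inst.restrict {ι : Type*} {V : ι → Type*} {S T : Finset ι} (h : S ⊆ T)
    (z : Inst V T) : Inst V S :=
  fun i => z ⟨i, h i.2⟩

/-- Transport an instantiation along an equality of variable sets. -/
def Inst.cast {ι : Type*} {V : ι → Type*} {S T : Finset ι} (h : S = T)
    (z : Inst V S) : Inst V T :=
  fun i => z ⟨i, h.symm ▸ i.2⟩

/-- Extend an instantiation `u` of `U` with a value `x` for the variable `X`,
yielding an instantiation of `insert X U`. -/
def Inst.consX {ι : Type*} [DecidableEq ι] {V : ι → Type*} {U : Finset ι} (X : ι)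
    (x : V X) (u : Inst V U) : Inst V (insert X U) :=
  fun i => if h : (i : ι) = X then _root_.cast (congrArg V h).symm x
           else u ⟨i, (Finset.mem_insert.mp i.2).resolve_left h⟩

/-- Extend an instantiation `w` of `W \ {X}` with a value `x` for `X ∈ W`,
yielding an instantiation of `W`. -/
def Inst.extendAt {ι : Type*} [DecidableEq ι] {V : ι → Type*} {W : Finset ι} (X : ι)
    (_hX : X ∈ W) (x : V X) (w : Inst V (W \ {X})) : Inst V W :=
  fun i => if h : (i : ι) = X then _root_.cast (congrArg V h).symm x
           else w ⟨i, Finset.mem_sdiff.mpr ⟨i.2, Finset.notMem_singleton.mpr h⟩⟩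

/-- The product of a factor over `S` and a factor over `T` is a factor over `S ∪ T`. -/
def Factor.mul {ι : Type*} [DecidableEq ι] {V : ι → Type*} {S T : Finset ι}
    (f : Inst V S → ℝ) (g : Inst V T → ℝ) : Inst V (S ∪ T) → ℝ :=
  fun z => f (fun i => z ⟨i, Finset.mem_union_left _ i.2⟩) *
           g (fun i => z ⟨i, Finset.mem_union_right _ i.2⟩)

/-- Summing out the variables `Y ⊆ S` from a factor over `S` yields a factor over `S \ Y`. -/
noncomputable def Factor.sumOut {ι : Type*} [DecidableEq ι] {V : ι → Type*}
    [∀ i, Fintype (V i)] {S : Finset ι} (Y : Finset ι) (_hY : Y ⊆ S)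
    (f : Inst V S → ℝ) : Inst V (S \ Y) → ℝ :=
  fun z => ∑ y : Inst V Y, f fun i =>
    if h : (i : ι) ∈ Y then y ⟨i, h⟩ else z ⟨i, Finset.mem_sdiff.mpr ⟨i.2, h⟩⟩

/-!
Fix an instantiation `z` of `Y ∪ W` with value `x₀` at `X` and restriction `u` to `U`; the factor
`G` contains `f (x₀, u) ∈ {0, 1}`. If it is `0`, both sides vanish. If it is `1`, then
`f (x, u) = 0` for every `x ≠ x₀` since the row of a CPT sums to `1`, so `H` vanishes at every
extension of `z` with `X ≠ x₀`, and summing out `X` just returns `H` at `z`.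
-/

section ZeroOneDistribution

variable {α R : Type*} [Fintype α] [Ring R] [PartialOrder R] [IsOrderedRing R]

theorem eq_zero_of_sum_eq_one_of_apply_eq_one {p : α → R} (hp0 : ∀ x, 0 ≤ p x)
    (hp : ∑ x, p x = 1) {a b : α} (ha : p a = 1) (hba : b ≠ a) : p b = 0 := by
  classical
  have hle : p a + p b ≤ ∑ x, p x := by
    rw [← Finset.sum_pair hba.symm]
    exact Finset.sum_le_sum_of_subset_of_nonneg (Finset.subset_univ _) fun x _ _ => hp0 x
  rw [hp, ← ha] at hle
  exact le_antisymm ((add_le_iff_nonpos_right _).mp hle) (hp0 b)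

theorem mul_sum_eq_mul_apply_of_zero_or_one {p h : α → R} (h01 : ∀ x, p x = 0 ∨ p x = 1)
    (hp : ∑ x, p x = 1) (hh : ∀ x, p x = 0 → h x = 0) (a : α) :
    p a * ∑ x, h x = p a * h a := by
  rcases h01 a with ha | ha
  · simp only [ha, zero_mul]
  · have hp0 : ∀ x, 0 ≤ p x := fun x => (h01 x).elim (·.symm ▸ le_rfl) (·.symm ▸ zero_le_one)
    rw [Finset.sum_eq_single a]
    · exact fun b _ hba => hh b (eq_zero_of_sum_eq_one_of_apply_eq_one hp0 hp ha hba)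
    · exact fun h => absurd (Finset.mem_univ a) h

end ZeroOneDistribution

namespace Inst

variable {ι : Type*} [DecidableEq ι] {V : ι → Type*}

theorem restrict_insert_eq_consX {X : ι} {U T : Finset ι} (h : insert X U ⊆ T) (z : Inst V T) :
    restrict h z = consX X (z ⟨X, h (Finset.mem_insert_self X U)⟩)
      (restrict ((Finset.subset_insert X U).trans h) z) := by
  funext ⟨i, hi⟩
  by_cases hiX : i = X
  · subst hiX
    simp [restrict, consX]
  · simp [restrict, consX, hiX]

theorem extendAt_restrict_self {X : ι} {W : Finset ι} (hX : X ∈ W) (z : Inst V W) :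
    extendAt X hX (z ⟨X, hX⟩) (restrict Finset.sdiff_subset z) = z := by
  funext ⟨i, hi⟩
  by_cases hiX : i = X
  · subst hiX
    simp [extendAt]
  · simp [restrict, extendAt, hiX]

theorem restrict_extendAt {X : ι} {U W : Finset ι} (hU : U ⊆ W \ {X}) (h : insert X U ⊆ W)
    (x : V X) (w : Inst V (W \ {X})) :
    restrict h (extendAt X (h (Finset.mem_insert_self X U)) x w) = consX X x (restrict hU w) := by
  funext ⟨i, hi⟩
  by_cases hiX : i = X
  · subst hiX
    simp [restrict, extendAt, consX]
  · simp [restrict, extendAt, consX, hiX]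

end Inst

theorem Factor.sumOut_singleton {ι : Type*} [DecidableEq ι] {V : ι → Type*} [∀ i, Fintype (V i)]
    {X : ι} {S : Finset ι} (h : {X} ⊆ S) (f : Inst V S → ℝ) (w : Inst V (S \ {X})) :
    sumOut {X} h f w = ∑ x : V X, f (Inst.extendAt X (Finset.singleton_subset_iff.mp h) x w) := by
  refine Fintype.sum_equiv (Equiv.piUnique _) _ _ fun y => congrArg f ?_
  funext ⟨i, hi⟩
  by_cases hiX : i = X
  · subst hiX
    simp only [Finset.mem_singleton, dite_true, Inst.extendAt, Equiv.piUnique, Equiv.coe_fn_mk,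
      cast_eq]
    rfl
  · simp [Inst.extendAt, hiX]

/-- **Theorem 3 of the paper.** Let `f` be a functional CPT for variable `X`
with parents `U`. If the products `G` (over `Y ⊇ {X} ∪ U`) and `H` (over `W ⊇ {X} ∪ U`)
both contain `f` as a multiplicand, then `G · H = G · (∑_X H)` as factors over `Y ∪ W`. -/
theorem mul_eq_mul_sumOut_of_functional {ι : Type*} [DecidableEq ι] (V : ι → Type*)
    [∀ i, Fintype (V i)]
    (X : ι) (U : Finset ι) (hXU : X ∉ U)
    (f : Inst V (insert X U) → ℝ)
    (hcpt : ∀ u : Inst V U, ∑ x : V X, f (Inst.consX X x u) = 1)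
    (hfun : ∀ (x : V X) (u : Inst V U),
      f (Inst.consX X x u) = 0 ∨ f (Inst.consX X x u) = 1)
    (Y W : Finset ι) (hY : insert X U ⊆ Y) (hW : insert X U ⊆ W)
    (G : Inst V Y → ℝ) (H : Inst V W → ℝ)
    (G₀ : Inst V Y → ℝ) (hG : ∀ z : Inst V Y, G z = f (Inst.restrict hY z) * G₀ z)
    (H₀ : Inst V W → ℝ) (hH : ∀ z : Inst V W, H z = f (Inst.restrict hW z) * H₀ z) :
    ∀ z : Inst V (Y ∪ W),
      Factor.mul G H z
        = Factor.mul G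
            (Factor.sumOut {X} (Finset.singleton_subset_iff.mpr (hW (Finset.mem_insert_self X U))) H)
            (Inst.cast
              (by
                have hXY : X ∈ Y := hY (Finset.mem_insert_self X U)
                ext a
                simp only [Finset.mem_union, Finset.mem_sdiff, Finset.mem_singleton]
                constructor
                · rintro (h | h)
                  · exact Or.inl h
                  · by_cases hx : a = X
                    · exact Or.inl (hx ▸ hXY)
                    · exact Or.inr ⟨h, hx⟩
                · rintro (h | ⟨h, _⟩)
                  · exact Or.inl h
                  · exact Or.inr h) z) := by
  intro z
  have hXW : X ∈ W := hW (Finset.mem_insert_self X U)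
  have hU : U ⊆ W \ {X} := Finset.subset_sdiff.mpr
    ⟨(Finset.subset_insert X U).trans hW, Finset.disjoint_singleton_right.mpr hXU⟩
  set zY := Inst.restrict Finset.subset_union_left z
  set zW := Inst.restrict Finset.subset_union_right z
  set w := Inst.restrict Finset.sdiff_subset zW
  set x₀ := zW ⟨X, hXW⟩
  set u := Inst.restrict hU w
  have hfY : Inst.restrict hY zY = Inst.consX X x₀ u := Inst.restrict_insert_eq_consX hY zY
  have hfW (x : V X) : Inst.restrict hW (Inst.extendAt X hXW x w) = Inst.consX X x u :=
    Inst.restrict_extendAt hU hW x w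
  have hHW : H zW = H (Inst.extendAt X hXW x₀ w) := by rw [Inst.extendAt_restrict_self]
  show G zY * H zW = G zY * Factor.sumOut {X} _ H w
  calc G zY * H zW = G₀ zY * (f (Inst.consX X x₀ u) * H (Inst.extendAt X hXW x₀ w)) := by
        rw [hG, hfY, hHW]; ring
    _ = G₀ zY * (f (Inst.consX X x₀ u) * ∑ x, H (Inst.extendAt X hXW x w)) := by
        rw [mul_sum_eq_mul_apply_of_zero_or_one (hfun · u) (hcpt u)
          fun x hx => by rw [hH, hfW, hx, zero_mul]]
    _ = G zY * Factor.sumOut {X} _ H w := by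
        rw [hG, hfY, Factor.sumOut_singleton]; ring
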